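/- (Squared-gradient normalization of the one-dimensional discrete heat kernel.) For t ≥ 0 and x ∈ ℤ let p_t(x) := (1/(2π))·∫_{−π}^{π} e^{t(cos k − 1)}·cos(kx) dk, and let ∇⁺f(x) := f(x+1) − f(x). Then Σ_{x ∈ ℤ} ∫_0^∞ (∇⁺p_t(x))² dt = 1. -/

import Mathlib

open MeasureTheory

/-- The transition probability of the continuous-time simple symmetric random walk on `ℤ`
with generator `½Δ`, given by its Fourier formula. -/
noncomputable def hk1 (t : ℝ) (x : ℤ) : ℝ :=
  (1 / (2 * Real.pi)) * ∫ k in Set.Icc (-Real.pi) Real.pi,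
    Real.exp (t * (Real.cos k - 1)) * Real.cos (k * (x : ℝ))

/-!
`∇⁺p_t(x)` is the `x`-th Fourier coefficient of `p̂_t(k) (e^{-ik} - 1)` on `(-π, π]`, where
`p̂_t(k) = e^{t(cos k - 1)}`, so by Parseval
`∑ₓ (∇⁺p_t(x))² = (2π)⁻¹ ∫_{-π}^{π} c(k) e^{-c(k) t} dk` with `c(k) = 2 - 2 cos k`.
For `k ≠ 0` we have `c(k) > 0` and `∫₀^∞ c e^{-c t} dt = 1`; exchanging the sum and the two
integrals (Tonelli) leaves `(2π)⁻¹ · 2π = 1`.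
-/

open Real Set

theorem intervalIntegral.integral_eq_zero_of_odd {f : ℝ → ℝ} (hf : ∀ x, f (-x) = -f x) (a : ℝ) :
    ∫ x in -a..a, f x = 0 := by
  have h := intervalIntegral.integral_comp_neg (a := -a) (b := a) f
  simp only [hf, intervalIntegral.integral_neg, neg_neg] at h
  linarith

theorem fourier_coe_apply_neg_pi_pi (n : ℤ) (x : ℝ) :
    fourier n (x : AddCircle (π - -π)) = Complex.exp (n * x * Complex.I) := by
  rw [fourier_coe_apply]
  congr 1
  push_cast
  field_simp
  ring

theorem fourierCoeffOn_fourier_mul {a b : ℝ} (hab : a < b) (f : ℝ → ℂ) (m n : ℤ) :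
    fourierCoeffOn hab (fun x => fourier m (x : AddCircle (b - a)) * f x) n =
      fourierCoeffOn hab f (n - m) := by
  simp only [fourierCoeffOn_eq_integral, smul_eq_mul, ← mul_assoc, ← fourier_add]
  ring_nf

theorem fourierCoeffOn_sub {E : Type*} [NormedAddCommGroup E] [NormedSpace ℂ E]
    [CompleteSpace E] {a b : ℝ} (hab : a < b) {f g : ℝ → E}
    (hf : IntervalIntegrable f volume a b) (hg : IntervalIntegrable g volume a b) (n : ℤ) :
    fourierCoeffOn hab (fun x => f x - g x) n =
      fourierCoeffOn hab f n - fourierCoeffOn hab g n := by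
  have hfourier : ContinuousOn (fun x : ℝ => fourier (-n) (x : AddCircle (b - a))) (uIcc a b) :=
    by fun_prop
  simp only [fourierCoeffOn_eq_integral, smul_sub]
  rw [intervalIntegral.integral_sub (hf.continuousOn_smul hfourier)
    (hg.continuousOn_smul hfourier), smul_sub]

theorem fourierCoeffOn_ofReal_of_even {g : ℝ → ℝ} (hg : IntervalIntegrable g volume (-π) π)
    (heven : ∀ x, g (-x) = g x) (n : ℤ) :
    fourierCoeffOn (neg_lt_self pi_pos) (fun x => (g x : ℂ)) n =
      ((1 / (2 * π) * ∫ x in -π..π, g x * cos (x * n) : ℝ) : ℂ) := by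
  have hsplit : ∀ x : ℝ, fourier (-n) (x : AddCircle (π - -π)) • (g x : ℂ) =
      ((g x * cos (x * n) : ℝ) : ℂ) - ((g x * sin (x * n) : ℝ) : ℂ) * Complex.I := by
    intro x
    rw [fourier_coe_apply_neg_pi_pi, smul_eq_mul,
      show ((-n : ℤ) : ℂ) * x * Complex.I = ((-(x * n) : ℝ) : ℂ) * Complex.I by push_cast; ring,
      Complex.exp_mul_I, ← Complex.ofReal_cos, ← Complex.ofReal_sin, cos_neg, sin_neg]
    push_cast
    ring
  have hodd : ∀ x, g (-x) * sin (-x * n) = -(g x * sin (x * n)) := by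
    intro x
    rw [heven, neg_mul, sin_neg, mul_neg]
  have hcos : IntervalIntegrable (fun x => g x * cos (x * n)) volume (-π) π :=
    hg.mul_continuousOn (by fun_prop)
  have hsin : IntervalIntegrable (fun x => g x * sin (x * n)) volume (-π) π :=
    hg.mul_continuousOn (by fun_prop)
  rw [fourierCoeffOn_eq_integral]
  simp_rw [hsplit]
  rw [intervalIntegral.integral_sub, intervalIntegral.integral_mul_const,
    intervalIntegral.integral_ofReal, intervalIntegral.integral_ofReal,
    intervalIntegral.integral_eq_zero_of_odd (f := fun x => g x * sin (x * n)) hodd]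
  · rw [Complex.real_smul]
    push_cast
    ring
  · exact ⟨hcos.1.ofReal, hcos.2.ofReal⟩
  · exact IntervalIntegrable.mul_const ⟨hsin.1.ofReal, hsin.2.ofReal⟩ _

noncomputable def heatSymbol (t k : ℝ) : ℝ :=
  exp (t * (cos k - 1))

theorem continuous_heatSymbol : Continuous (Function.uncurry heatSymbol) := by
  unfold heatSymbol
  fun_prop

theorem hk1_eq_intervalIntegral (t : ℝ) (x : ℤ) :
    hk1 t x = 1 / (2 * π) * ∫ k in -π..π, heatSymbol t k * cos (k * x) := by
  rw [hk1, intervalIntegral.integral_of_le (neg_le_self pi_pos.le), integral_Icc_eq_integral_Ioc]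
  rfl

theorem continuous_hk1 (x : ℤ) : Continuous fun t => hk1 t x := by
  simp_rw [hk1_eq_intervalIntegral]
  have := continuous_heatSymbol
  fun_prop

theorem fourierCoeffOn_heatSymbol (t : ℝ) (n : ℤ) :
    fourierCoeffOn (neg_lt_self pi_pos) (fun k => (heatSymbol t k : ℂ)) n = hk1 t n := by
  rw [fourierCoeffOn_ofReal_of_even
    ((continuous_heatSymbol.uncurry_left t).intervalIntegrable _ _)
    (fun k => by simp only [heatSymbol, cos_neg]), hk1_eq_intervalIntegral]

theorem fourierCoeffOn_heatSymbol_mul_fourier_sub_one (t : ℝ) (n : ℤ) :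
    fourierCoeffOn (neg_lt_self pi_pos)
        (fun k => (heatSymbol t k : ℂ) * (fourier (-1) (k : AddCircle (π - -π)) - 1)) n =
      ((hk1 t (n + 1) - hk1 t n : ℝ) : ℂ) := by
  have hsymbol : Continuous fun k => (heatSymbol t k : ℂ) :=
    Complex.continuous_ofReal.comp (continuous_heatSymbol.uncurry_left t)
  have hmod : Continuous fun k : ℝ =>
      fourier (-1) (k : AddCircle (π - -π)) * (heatSymbol t k : ℂ) := by
    fun_prop
  have hsplit : (fun k : ℝ => (heatSymbol t k : ℂ) * (fourier (-1) (k : AddCircle (π - -π)) - 1)) =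
      fun k : ℝ =>
        fourier (-1) (k : AddCircle (π - -π)) * (heatSymbol t k : ℂ) - heatSymbol t k := by
    funext k
    ring
  rw [hsplit, fourierCoeffOn_sub _ (hmod.intervalIntegrable _ _) (hsymbol.intervalIntegrable _ _),
    fourierCoeffOn_fourier_mul, sub_neg_eq_add, fourierCoeffOn_heatSymbol,
    fourierCoeffOn_heatSymbol, Complex.ofReal_sub]

theorem norm_sq_heatSymbol_mul_fourier_sub_one (t k : ℝ) :
    ‖(heatSymbol t k : ℂ) * (fourier (-1) (k : AddCircle (π - -π)) - 1)‖ ^ 2 =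
      (2 - 2 * cos k) * exp (-(2 - 2 * cos k) * t) := by
  have hmod : ‖fourier (-1) (k : AddCircle (π - -π)) - 1‖ ^ 2 = 2 - 2 * cos k := by
    rw [fourier_coe_apply_neg_pi_pi,
      show ((-1 : ℤ) : ℂ) * k * Complex.I = ((-k : ℝ) : ℂ) * Complex.I by push_cast; ring,
      Complex.sq_norm, Complex.normSq_apply]
    simp only [Complex.sub_re, Complex.sub_im, Complex.exp_ofReal_mul_I_re,
      Complex.exp_ofReal_mul_I_im, Complex.one_re, Complex.one_im, cos_neg, sin_neg]
    nlinarith [sin_sq_add_cos_sq k]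
  rw [norm_mul, mul_pow, hmod, Complex.norm_real, heatSymbol, norm_of_nonneg (exp_pos _).le,
    ← exp_nat_mul]
  ring_nf

theorem hasSum_sq_grad_hk1 (t : ℝ) :
    HasSum (fun x : ℤ => (hk1 t (x + 1) - hk1 t x) ^ 2)
      ((2 * π)⁻¹ * ∫ k in -π..π, (2 - 2 * cos k) * exp (-(2 - 2 * cos k) * t)) := by
  have hcont : Continuous fun k : ℝ =>
      (heatSymbol t k : ℂ) * (fourier (-1) (k : AddCircle (π - -π)) - 1) := by
    have := continuous_heatSymbol.uncurry_left t
    fun_prop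
  have hL2 := (memLp_two_iff_integrable_sq_norm hcont.aestronglyMeasurable).2
    ((hcont.norm.pow 2).integrableOn_Ioc (μ := volume) (a := -π) (b := π))
  have h := hasSum_sq_fourierCoeffOn (neg_lt_self pi_pos) hL2
  simp only [fourierCoeffOn_heatSymbol_mul_fourier_sub_one, norm_sq_heatSymbol_mul_fourier_sub_one,
    Complex.norm_real, norm_eq_abs, sq_abs] at h
  rwa [smul_eq_mul, sub_neg_eq_add, ← two_mul] at h

theorem lintegral_mul_exp_neg_mul_Ioi {c : ℝ} (hc : 0 < c) :
    ∫⁻ t in Ioi 0, ENNReal.ofReal (c * exp (-c * t)) = 1 := by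
  have hint : IntegrableOn (fun t => c * exp (-c * t)) (Ioi 0) :=
    (exp_neg_integrableOn_Ioi 0 hc).const_mul c
  rw [← ofReal_integral_eq_lintegral_ofReal hint (ae_of_all _ fun t => by positivity),
    integral_const_mul, integral_exp_mul_Ioi (neg_lt_zero.2 hc), mul_zero, exp_zero,
    show c * (-1 / -c) = 1 by field_simp, ENNReal.ofReal_one]

theorem cos_lt_one_of_mem_Ioc {k : ℝ} (hk : k ∈ Ioc (-π) π) (hk0 : k ≠ 0) : cos k < 1 :=
  (cos_le_one k).lt_of_ne fun h =>
    hk0 ((cos_eq_one_iff_of_lt_of_lt (by linarith [hk.1, pi_pos]) (by linarith [hk.2, pi_pos])).1 h)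

theorem tsum_lintegral_sq_grad_hk1 :
    ∑' x : ℤ, ∫⁻ t in Ioi 0, ENNReal.ofReal ((hk1 t (x + 1) - hk1 t x) ^ 2) = 1 := by
  set g : ℝ → ℝ → ℝ := fun t k => (2 - 2 * cos k) * exp (-(2 - 2 * cos k) * t)
  have hg_cont : Continuous g.uncurry := by fun_prop
  have hg_nonneg : ∀ t k, 0 ≤ g t k := fun t k =>
    mul_nonneg (by linarith [cos_le_one k]) (exp_pos _).le
  have hparseval : ∀ t, ∑' x : ℤ, ENNReal.ofReal ((hk1 t (x + 1) - hk1 t x) ^ 2) =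
      ENNReal.ofReal (2 * π)⁻¹ * ∫⁻ k in Ioc (-π) π, ENNReal.ofReal (g t k) := by
    intro t
    rw [← ENNReal.ofReal_tsum_of_nonneg (fun x => sq_nonneg _) (hasSum_sq_grad_hk1 t).summable,
      (hasSum_sq_grad_hk1 t).tsum_eq, ENNReal.ofReal_mul (by positivity),
      intervalIntegral.integral_of_le (neg_le_self pi_pos.le),
      ofReal_integral_eq_lintegral_ofReal ((hg_cont.uncurry_left t).integrableOn_Ioc)
        (ae_of_all _ (hg_nonneg t))]
  have htime : ∀ᵐ k ∂(volume.restrict (Ioc (-π) π)), ∫⁻ t in Ioi 0, ENNReal.ofReal (g t k) = 1 := by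
    filter_upwards [ae_restrict_mem measurableSet_Ioc, ae_restrict_of_ae (Measure.ae_ne volume 0)]
      with k hk hk0
    exact lintegral_mul_exp_neg_mul_Ioi (by linarith [cos_lt_one_of_mem_Ioc hk hk0])
  have hmeas : ∀ x : ℤ, AEMeasurable (fun t => ENNReal.ofReal ((hk1 t (x + 1) - hk1 t x) ^ 2))
      (volume.restrict (Ioi 0)) := fun x =>
    (ENNReal.continuous_ofReal.comp
      (((continuous_hk1 (x + 1)).sub (continuous_hk1 x)).pow 2)).aemeasurable
  rw [← lintegral_tsum hmeas]
  simp_rw [hparseval]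
  rw [lintegral_const_mul' _ _ ENNReal.ofReal_ne_top,
    lintegral_lintegral_swap (f := fun t k => ENNReal.ofReal (g t k))
      (ENNReal.continuous_ofReal.comp hg_cont).aemeasurable,
    lintegral_congr_ae htime, setLIntegral_one, volume_Ioc, ← ENNReal.ofReal_mul (by positivity),
    show (2 * π)⁻¹ * (π - -π) = 1 by field_simp; ring, ENNReal.ofReal_one]

/-- Squared-gradient normalization: `Σ_x ∫_0^∞ (∇⁺p_t(x))² dt = 1`. -/
theorem stmt9 :
    ∑' x : ℤ, ∫ t in Set.Ioi (0:ℝ), (hk1 t (x+1) - hk1 t x)^2 = 1 := by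
  have hfinite : ∀ x : ℤ, ∫⁻ t in Ioi 0, ENNReal.ofReal ((hk1 t (x + 1) - hk1 t x) ^ 2) ≠ ⊤ :=
    fun x => ne_top_of_le_ne_top ENNReal.one_ne_top
      (tsum_lintegral_sq_grad_hk1 ▸ ENNReal.le_tsum x)
  calc ∑' x : ℤ, ∫ t in Ioi 0, (hk1 t (x + 1) - hk1 t x) ^ 2
      = ∑' x : ℤ, (∫⁻ t in Ioi 0, ENNReal.ofReal ((hk1 t (x + 1) - hk1 t x) ^ 2)).toReal :=
        tsum_congr fun x => integral_eq_lintegral_of_nonneg_ae (ae_of_all _ fun t => sq_nonneg _)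
          (((continuous_hk1 (x + 1)).sub (continuous_hk1 x)).pow 2).aestronglyMeasurable
    _ = 1 := by
      rw [← ENNReal.tsum_toReal_eq hfinite, tsum_lintegral_sq_grad_hk1, ENNReal.toReal_one]
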